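/- arXiv:1401.1934 — 5 statements merged into one kernel-verified Lean document; each statement's English description precedes it below -/
import Mathlib

section
/- Let X be a complex separable infinite-dimensional Banach space and let T be a bounded linear operator on X. Suppose there exists a sequence (u_n)_{n≥1} of nonzero vectors in X and a sequence (λ_n)_{n≥1} of complex numbers such that: (i) T u_n = λ_n u_n with |λ_n| = 1 for all n, and the λ_n are pairwise distinct; (ii) the linear span of {u_n : n ≥ 1} is dense in X; (iii) for every n ≥ 1 and every ε > 0 there exists m ≠ n with ‖u_n − u_m‖ < ε. Then T is hypercyclic. -/
/-!
By Birkhoff's transitivity theorem it suffices to find, for `x = ∑ a n • u n` and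
`y = ∑ b n • u n` (finite sums over `S`) and `ε > 0`, a vector `z` close to `x` with `T ^ k z`
close to `y`. Each `u n` is paired with an eigenvector `u m` very close to it; the eigenvector
equation forces `lam m` to be close to `lam n`, and injectivity makes it different. On the plane of
`u n` and `u m`, any pair of coefficients `(a, b)` is reached by some `(a - B) • u n + B • u m` up
to an error `B • (u m - u n)`, with `‖B‖ ≤ (‖a‖ + ‖b‖) / ‖lam m ^ k - lam n ^ k‖`. A Lebesgue
measure estimate gives a common exponent `k` for which all `‖lam m ^ k - lam n ^ k‖` are at least
`1 / (4 #S)`, a bound independent of the partners; so the partners can be chosen afterwards close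
enough to make every error small.
-/

open Set Finset Function MeasureTheory Real

theorem exists_dense_range_of_dense_iUnion_preimage {X : Type*} [TopologicalSpace X]
    [Nonempty X] [BaireSpace X] [SecondCountableTopology X] (f : ℕ → X → X)
    (hf : ∀ n, Continuous (f n))
    (h : ∀ U : Set X, IsOpen U → U.Nonempty → Dense (⋃ n, f n ⁻¹' U)) :
    ∃ x, Dense (range fun n => f n x) := by
  obtain ⟨B, hBc, -, hB⟩ := TopologicalSpace.exists_countable_basis X
  have hG : Dense (⋂ U ∈ {U ∈ B | U.Nonempty}, ⋃ n, f n ⁻¹' U) :=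
    dense_biInter_of_isOpen (fun U hU => isOpen_iUnion fun n => (hB.isOpen hU.1).preimage (hf n))
      (hBc.mono (sep_subset _ _)) fun U hU => h U (hB.isOpen hU.1) hU.2
  obtain ⟨x, hx⟩ := hG.nonempty
  refine ⟨x, hB.dense_iff.mpr fun U hU hUne => ?_⟩
  obtain ⟨n, hn⟩ := mem_iUnion.mp (mem_iInter₂.mp hx U ⟨hU, hUne⟩)
  exact ⟨f n x, hn, n, rfl⟩

theorem dense_iUnion_preimage_of_forall_exists_dist_lt {X : Type*} [PseudoMetricSpace X]
    (f : ℕ → X → X) {D : Set X} (hD : Dense D)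
    (h : ∀ x ∈ D, ∀ y ∈ D, ∀ ε > 0, ∃ z n, dist z x < ε ∧ dist (f n z) y < ε)
    {U : Set X} (hU : IsOpen U) (hUne : U.Nonempty) : Dense (⋃ n, f n ⁻¹' U) := by
  obtain ⟨v, hv⟩ := hUne
  obtain ⟨r, hr, hball⟩ := Metric.isOpen_iff.mp hU v hv
  refine Metric.dense_iff.mpr fun w ε hε => ?_
  obtain ⟨x, hxD, hxw⟩ := Metric.mem_closure_iff.mp (hD w) (ε / 2) (half_pos hε)
  obtain ⟨y, hyD, hyv⟩ := Metric.mem_closure_iff.mp (hD v) (r / 2) (half_pos hr)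
  obtain ⟨z, n, hzx, hzy⟩ := h x hxD y hyD (min (ε / 2) (r / 2)) (by positivity)
  refine ⟨z, ?_, mem_iUnion.mpr ⟨n, hball ?_⟩⟩
  · calc dist z w ≤ dist z x + dist w x := dist_triangle_right _ _ _
      _ < ε := by linarith [min_le_left (ε / 2) (r / 2)]
  · calc dist (f n z) v ≤ dist (f n z) y + dist v y := dist_triangle_right _ _ _
      _ < r := by linarith [min_le_right (ε / 2) (r / 2)]

theorem volume_Icc_inter_setOf_abs_mul_sub_int_lt_le {w c L : ℝ} (hw : w ≠ 0) (hc₀ : 0 ≤ c)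
    (hc₁ : c ≤ 1) (hL : 0 ≤ L) :
    volume (Icc 0 L ∩ {t | ∃ m : ℤ, |t * w - m| < c}) ≤
      ENNReal.ofReal (4 * c * L + 10 * c / |w|) := by
  have hw' : 0 < |w| := abs_pos.mpr hw
  set M : ℕ := ⌈L * |w| + c⌉₊
  have hsub : Icc 0 L ∩ {t | ∃ m : ℤ, |t * w - m| < c} ⊆
      ⋃ m ∈ Finset.Icc (-(M : ℤ)) M, Metric.ball ((m : ℝ) / w) (c / |w|) := by
    rintro t ⟨⟨ht0, htL⟩, m, hm⟩
    have hmM : |(m : ℝ)| ≤ M := by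
      have : |t * w| ≤ L * |w| := by rw [abs_mul, abs_of_nonneg ht0]; gcongr
      linarith [abs_sub_abs_le_abs_sub (m : ℝ) (t * w), abs_sub_comm (m : ℝ) (t * w),
        Nat.le_ceil (L * |w| + c)]
    refine mem_biUnion (Finset.mem_Icc.mpr (abs_le.mp (by exact_mod_cast hmM))) ?_
    rw [Metric.mem_ball, Real.dist_eq, show t - m / w = (t * w - m) / w by field_simp, abs_div]
    exact div_lt_div_of_pos_right hm hw'
  have hcard : ((Finset.Icc (-(M : ℤ)) M).card : ℝ) ≤ 2 * L * |w| + 2 * c + 3 := by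
    rw [Int.card_Icc, show (M : ℤ) + 1 - -M = ((2 * M + 1 : ℕ) : ℤ) by push_cast; ring,
      Int.toNat_natCast]
    push_cast
    linarith [Nat.ceil_lt_add_one (by positivity : 0 ≤ L * |w| + c)]
  calc volume (Icc 0 L ∩ {t | ∃ m : ℤ, |t * w - m| < c})
      ≤ ∑ m ∈ Finset.Icc (-(M : ℤ)) M, volume (Metric.ball ((m : ℝ) / w) (c / |w|)) :=
        (measure_mono hsub).trans (measure_biUnion_finset_le _ _)
    _ = ENNReal.ofReal ((Finset.Icc (-(M : ℤ)) M).card * (2 * (c / |w|))) := by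
        simp [Real.volume_ball, ENNReal.ofReal_mul, ENNReal.ofReal_natCast]
    _ ≤ ENNReal.ofReal (4 * c * L + 10 * c / |w|) := by
        gcongr
        calc _ ≤ (2 * L * |w| + 2 * c + 3) * (2 * (c / |w|)) := by gcongr
          _ = 4 * c * L + (4 * c * c + 6 * c) / |w| := by field_simp; ring
          _ ≤ 4 * c * L + 10 * c / |w| := by gcongr; nlinarith

theorem exists_nonneg_forall_le_abs_mul_sub_int {ι : Type*} (S : Finset ι) {w : ι → ℝ}
    (hw : ∀ i ∈ S, w i ≠ 0) : ∃ t : ℝ, 0 ≤ t ∧ ∀ i ∈ S, ∀ m : ℤ, 1 / (8 * #S) ≤ |t * w i - m| := by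
  set c : ℝ := 1 / (8 * #S)
  have hc₀ : 0 ≤ c := by positivity
  obtain ⟨hc₁, hcS⟩ : c ≤ 1 ∧ c * #S ≤ 1 / 8 := by
    rcases Nat.eq_zero_or_pos #S with hS | hS
    · simp [c, hS]
    · have hS' : (1 : ℝ) ≤ #S := by exact_mod_cast hS
      refine ⟨div_le_one_of_le₀ (by linarith) (by positivity), le_of_eq ?_⟩
      simp only [c]
      field_simp
  set W : ℝ := ∑ i ∈ S, 1 / |w i|
  have hW : 0 ≤ W := by positivity
  set L : ℝ := 20 * c * W + 1
  have hL : 0 ≤ L := by positivity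
  have hvol : volume (⋃ i ∈ S, Icc 0 L ∩ {t | ∃ m : ℤ, |t * w i - m| < c}) < volume (Icc 0 L) := by
    calc volume (⋃ i ∈ S, Icc 0 L ∩ {t | ∃ m : ℤ, |t * w i - m| < c})
        ≤ ∑ i ∈ S, ENNReal.ofReal (4 * c * L + 10 * c / |w i|) :=
          (measure_biUnion_finset_le _ _).trans (Finset.sum_le_sum fun i hi =>
            volume_Icc_inter_setOf_abs_mul_sub_int_lt_le (hw i hi) hc₀ hc₁ hL)
      _ = ENNReal.ofReal (4 * (c * #S) * L + 10 * c * W) := by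
          rw [← ENNReal.ofReal_sum_of_nonneg (fun i _ => by positivity), Finset.sum_add_distrib,
            Finset.sum_const, nsmul_eq_mul, Finset.mul_sum]
          congr 1
          ring_nf
      _ < ENNReal.ofReal L := (ENNReal.ofReal_lt_ofReal_iff (by positivity)).mpr (by nlinarith)
      _ = volume (Icc 0 L) := by rw [Real.volume_Icc, sub_zero]
  obtain ⟨t, ht, hbad⟩ := Set.not_subset.mp fun h => (measure_mono h).not_gt hvol
  refine ⟨t, ht.1, fun i hi m => not_lt.mp fun hm => hbad (mem_biUnion hi ⟨ht, m, hm⟩)⟩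

theorem exists_nat_forall_le_abs_mul_sub_int {ι : Type*} (S : Finset ι) {w : ι → ℝ}
    (hw : ∀ i ∈ S, w i ≠ 0) (hsmall : ∀ i ∈ S, |w i| ≤ 1 / (16 * #S)) :
    ∃ k : ℕ, ∀ i ∈ S, ∀ m : ℤ, 1 / (16 * #S) ≤ |k * w i - m| := by
  obtain ⟨t, ht, hfar⟩ := exists_nonneg_forall_le_abs_mul_sub_int S hw
  refine ⟨⌊t⌋₊, fun i hi m => ?_⟩
  have hround : |t * w i - ⌊t⌋₊ * w i| ≤ |w i| := by
    rw [← sub_mul, abs_mul, abs_of_nonneg (sub_nonneg.mpr (Nat.floor_le ht))]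
    exact mul_le_of_le_one_left (abs_nonneg _) (by linarith [Nat.lt_floor_add_one t])
  have hhalf : 1 / (8 * (#S : ℝ)) = 2 * (1 / (16 * #S)) := by ring
  linarith [hfar i hi m, hsmall i hi, abs_sub_le (t * w i) (⌊t⌋₊ * w i) m]

theorem four_mul_le_norm_exp_sub_one {x c : ℝ} (h : ∀ m : ℤ, c ≤ |x - m|) :
    4 * c ≤ ‖Complex.exp ((2 * π * x : ℝ) * Complex.I) - 1‖ := by
  have hangle := Complex.mul_angle_le_norm_sub (Complex.norm_exp_ofReal_mul_I (2 * π * x)) norm_one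
  rw [Complex.angle_exp_one] at hangle
  set z : ℤ := toIocDiv two_pi_pos (-π) (2 * π * x)
  have hmod : |toIocMod two_pi_pos (-π) (2 * π * x)| = 2 * π * |x - z| := by
    rw [toIocMod, zsmul_eq_mul, show 2 * π * x - z * (2 * π) = 2 * π * (x - z) by ring, abs_mul,
      abs_of_pos two_pi_pos]
  calc 4 * c = 2 / π * (2 * π * c) := by field_simp; ring
    _ ≤ 2 / π * (2 * π * |x - z|) := by gcongr; exact h z
    _ ≤ _ := hmod ▸ hangle

theorem exists_pow_forall_le_norm_pow_sub_one {ι : Type*} (S : Finset ι) {ν : ι → ℂ}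
    (hnorm : ∀ i ∈ S, ‖ν i‖ = 1) (hne : ∀ i ∈ S, ν i ≠ 1)
    (hclose : ∀ i ∈ S, ‖ν i - 1‖ ≤ 1 / (4 * #S)) :
    ∃ k : ℕ, ∀ i ∈ S, 1 / (4 * #S) ≤ ‖ν i ^ k - 1‖ := by
  have hexp : ∀ i ∈ S, Complex.exp ((ν i).arg * Complex.I) = ν i := fun i hi => by
    simpa [hnorm i hi] using Complex.norm_mul_exp_arg_mul_I (ν i)
  have hw : ∀ i ∈ S, (ν i).arg / (2 * π) ≠ 0 := fun i hi h => hne i hi <| by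
    rw [← hexp i hi, div_eq_zero_iff.mp h |>.resolve_right (by positivity)]
    simp
  have hsmall : ∀ i ∈ S, |(ν i).arg / (2 * π)| ≤ 1 / (16 * #S) := fun i hi => by
    have harg := Complex.angle_le_mul_norm_sub (hnorm i hi) norm_one
    rw [Complex.angle_one_right (norm_ne_zero_iff.mp (by simp [hnorm i hi]))] at harg
    rw [abs_div, abs_of_pos two_pi_pos, div_le_iff₀ two_pi_pos]
    calc |(ν i).arg| ≤ π / 2 * (1 / (4 * #S)) := harg.trans (by gcongr; exact hclose i hi)
      _ = 1 / (16 * #S) * (2 * π) := by ring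
  obtain ⟨k, hk⟩ := exists_nat_forall_le_abs_mul_sub_int S hw hsmall
  refine ⟨k, fun i hi => ?_⟩
  have hfar := four_mul_le_norm_exp_sub_one (hk i hi)
  rw [show 2 * π * (k * ((ν i).arg / (2 * π))) = k * (ν i).arg by field_simp] at hfar
  push_cast at hfar
  rw [mul_assoc, Complex.exp_nat_mul, hexp i hi] at hfar
  calc 1 / (4 * (#S : ℝ)) = 4 * (1 / (16 * #S)) := by ring
    _ ≤ _ := hfar

theorem exists_pow_forall_le_norm_pow_sub_pow {ι : Type*} (S : Finset ι) {a b : ι → ℂ}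
    (ha : ∀ i ∈ S, ‖a i‖ = 1) (hb : ∀ i ∈ S, ‖b i‖ = 1) (hne : ∀ i ∈ S, b i ≠ a i)
    (hclose : ∀ i ∈ S, ‖b i - a i‖ ≤ 1 / (4 * #S)) :
    ∃ k : ℕ, ∀ i ∈ S, 1 / (4 * #S) ≤ ‖b i ^ k - a i ^ k‖ := by
  have ha₀ : ∀ i ∈ S, a i ≠ 0 := fun i hi => norm_ne_zero_iff.mp (by simp [ha i hi])
  have hdiv : ∀ i ∈ S, ∀ k : ℕ, ‖(b i / a i) ^ k - 1‖ = ‖b i ^ k - a i ^ k‖ := fun i hi k => by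
    rw [div_pow, div_sub_one (pow_ne_zero k (ha₀ i hi)), norm_div, norm_pow, ha i hi, one_pow,
      div_one]
  obtain ⟨k, hk⟩ := exists_pow_forall_le_norm_pow_sub_one S (ν := fun i => b i / a i)
    (fun i hi => by simp [ha i hi, hb i hi])
    (fun i hi => div_ne_one_of_ne (hne i hi))
    (fun i hi => (by simpa using hdiv i hi 1 : ‖b i / a i - 1‖ = ‖b i - a i‖) ▸ hclose i hi)
  exact ⟨k, fun i hi => hdiv i hi k ▸ hk i hi⟩

section Eigenvectors

variable {𝕜 E : Type*} [NontriviallyNormedField 𝕜] [SeminormedAddCommGroup E] [NormedSpace 𝕜 E]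
  (T : E →L[𝕜] E)

theorem pow_apply_of_apply_eq_smul {u : E} {a : 𝕜} (hu : T u = a • u) (k : ℕ) :
    (T ^ k) u = a ^ k • u := by
  induction k with
  | zero => simp
  | succ k ih => simp [pow_succ', ih, hu, smul_smul, mul_comm]

theorem norm_sub_mul_norm_le_of_apply_eq_smul {u v : E} {a b : 𝕜} (hu : T u = a • u)
    (hv : T v = b • v) : ‖b - a‖ * ‖v‖ ≤ (‖T‖ + ‖a‖) * ‖v - u‖ := by
  have h : (b - a) • v = T (v - u) - a • (v - u) := by
    rw [map_sub, hu, hv, sub_smul, smul_sub]; abel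
  calc ‖b - a‖ * ‖v‖ = ‖T (v - u) - a • (v - u)‖ := by rw [← h, norm_smul]
    _ ≤ ‖T‖ * ‖v - u‖ + ‖a‖ * ‖v - u‖ :=
        (norm_sub_le _ _).trans (add_le_add (T.le_opNorm _) (norm_smul_le _ _))
    _ = (‖T‖ + ‖a‖) * ‖v - u‖ := by ring

theorem exists_norm_sub_smul_le_of_le_norm_pow_sub_pow {u v : E} {a b : 𝕜} (hu : T u = a • u)
    (hv : T v = b • v) (ha : ‖a‖ = 1) (hb : ‖b‖ = 1) {k : ℕ} {c : ℝ} (hc : 0 < c)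
    (hk : c ≤ ‖b ^ k - a ^ k‖) (x y : 𝕜) :
    ∃ z, ‖z - x • u‖ ≤ (‖x‖ + ‖y‖) / c * ‖v - u‖ ∧
      ‖(T ^ k) z - y • u‖ ≤ (‖x‖ + ‖y‖) / c * ‖v - u‖ := by
  have hk₀ : b ^ k - a ^ k ≠ 0 := norm_pos_iff.mp (hc.trans_le hk)
  -- chosen so that the `u`-coordinate of `T ^ k z` below is exactly `y`
  set B := (y - x * a ^ k) / (b ^ k - a ^ k)
  have hB : ‖B‖ ≤ (‖x‖ + ‖y‖) / c := by
    rw [norm_div]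
    refine div_le_div₀ (by positivity) ((norm_sub_le _ _).trans ?_) hc hk
    rw [norm_mul, norm_pow, ha, one_pow, mul_one, add_comm]
  have hBk : B * (b ^ k - a ^ k) = y - x * a ^ k := div_mul_cancel₀ _ hk₀
  clear_value B
  refine ⟨x • u + B • (v - u), ?_, ?_⟩
  · rw [add_sub_cancel_left, norm_smul]
    exact mul_le_mul_of_nonneg_right hB (norm_nonneg _)
  · have hz : (T ^ k) (x • u + B • (v - u)) - y • u = (B * b ^ k) • (v - u) := by
      rw [map_add, map_smul, map_smul, map_sub, pow_apply_of_apply_eq_smul T hu,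
        pow_apply_of_apply_eq_smul T hv]
      linear_combination (norm := module) hBk • u
    rw [hz, norm_smul, norm_mul, norm_pow, hb, one_pow, mul_one]
    exact mul_le_mul_of_nonneg_right hB (norm_nonneg _)

end Eigenvectors

theorem exists_eigenvalue_near_of_eigenvector_near {ι 𝕜 E : Type*} [NontriviallyNormedField 𝕜]
    [NormedAddCommGroup E] [NormedSpace 𝕜 E] (T : E →L[𝕜] E) {u : ι → E} {lam : ι → 𝕜}
    (heig : ∀ i, T (u i) = lam i • u i) (hdist : Injective lam)
    (happrox : ∀ i, ∀ ε > (0 : ℝ), ∃ j, j ≠ i ∧ ‖u i - u j‖ < ε) {i : ι} (hu : u i ≠ 0)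
    {δ : ℝ} (hδ : 0 < δ) : ∃ j, lam j ≠ lam i ∧ ‖u j - u i‖ < δ ∧ ‖lam j - lam i‖ < δ := by
  have hui : 0 < ‖u i‖ := norm_pos_iff.mpr hu
  set K := ‖T‖ + ‖lam i‖
  set ρ := min (min δ (‖u i‖ / 2)) (δ * ‖u i‖ / (2 * (K + 1)))
  have hρ : 0 < ρ := by positivity
  obtain ⟨j, hji, hj⟩ := happrox i ρ hρ
  rw [norm_sub_rev] at hj
  have hρδ : ρ ≤ δ := (min_le_left _ _).trans (min_le_left _ _)
  have hρu : ρ ≤ ‖u i‖ / 2 := (min_le_left _ _).trans (min_le_right _ _)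
  refine ⟨j, hdist.ne hji, hj.trans_le hρδ, ?_⟩
  have hKρ : K * ‖u j - u i‖ < δ * ‖u i‖ / 2 := by
    have : ρ * (2 * (K + 1)) ≤ δ * ‖u i‖ := (le_div_iff₀ (by positivity)).mp (min_le_right _ _)
    nlinarith [norm_nonneg (u j - u i), norm_nonneg T, norm_nonneg (lam i)]
  have huj : ‖u i‖ / 2 ≤ ‖u j‖ := by
    linarith [norm_sub_norm_le (u i) (u j), norm_sub_rev (u i) (u j)]
  have h := norm_sub_mul_norm_le_of_apply_eq_smul T (heig i) (heig j)
  nlinarith [norm_nonneg (lam j - lam i)]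

theorem exists_norm_sub_sum_le_sum {ι E F G : Type*} [SeminormedAddCommGroup E]
    [SeminormedAddCommGroup F] [FunLike G E F] [AddMonoidHomClass G E F] (L : G) (S : Finset ι)
    {x : ι → E} {y : ι → F} {e : ι → ℝ} (h : ∀ i ∈ S, ∃ z, ‖z - x i‖ ≤ e i ∧ ‖L z - y i‖ ≤ e i) :
    ∃ z, ‖z - ∑ i ∈ S, x i‖ ≤ ∑ i ∈ S, e i ∧ ‖L z - ∑ i ∈ S, y i‖ ≤ ∑ i ∈ S, e i := by
  choose! z hz using h
  refine ⟨∑ i ∈ S, z i, ?_, ?_⟩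
  · rw [← sum_sub_distrib]
    exact (norm_sum_le _ _).trans (sum_le_sum fun i hi => (hz i hi).1)
  · rw [map_sum, ← sum_sub_distrib]
    exact (norm_sum_le _ _).trans (sum_le_sum fun i hi => (hz i hi).2)

theorem exists_finset_sum_smul_eq_of_mem_span {ι R M : Type*} [Semiring R] [AddCommMonoid M]
    [Module R M] {v : ι → M} {x y : M} (hx : x ∈ Submodule.span R (range v))
    (hy : y ∈ Submodule.span R (range v)) :
    ∃ (S : Finset ι) (a b : ι → R), x = ∑ i ∈ S, a i • v i ∧ y = ∑ i ∈ S, b i • v i := by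
  classical
  obtain ⟨a, rfl⟩ := Finsupp.mem_span_range_iff_exists_finsupp.mp hx
  obtain ⟨b, rfl⟩ := Finsupp.mem_span_range_iff_exists_finsupp.mp hy
  exact ⟨a.support ∪ b.support, a, b,
    Finsupp.sum_of_support_subset a subset_union_left _ fun i _ => zero_smul R (v i),
    Finsupp.sum_of_support_subset b subset_union_right _ fun i _ => zero_smul R (v i)⟩

theorem exists_dist_lt_of_mem_span {ι X : Type*} [NormedAddCommGroup X] [NormedSpace ℂ X]
    (T : X →L[ℂ] X) {u : ι → X} {lam : ι → ℂ}
    (heig : ∀ i, T (u i) = lam i • u i) (hmod : ∀ i, ‖lam i‖ = 1)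
    (hpartner : ∀ i, ∀ δ > (0 : ℝ), ∃ j, lam j ≠ lam i ∧ ‖u j - u i‖ < δ ∧ ‖lam j - lam i‖ < δ)
    {x y : X} (hx : x ∈ Submodule.span ℂ (range u)) (hy : y ∈ Submodule.span ℂ (range u))
    {ε : ℝ} (hε : 0 < ε) : ∃ z k, dist z x < ε ∧ dist ((T ^ k) z) y < ε := by
  obtain ⟨S, a, b, rfl, rfl⟩ := exists_finset_sum_smul_eq_of_mem_span hx hy
  rcases S.eq_empty_or_nonempty with rfl | hS
  · exact ⟨0, 0, by simpa using hε, by simpa using hε⟩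
  set c : ℝ := 1 / (4 * #S)
  have hc : 0 < c := by have := hS.card_pos; positivity
  set A := ∑ i ∈ S, (‖a i‖ + ‖b i‖)
  have hA : 0 ≤ A := by positivity
  set δ := min c (ε * c / (A + 1))
  choose p hp_ne hp_u hp_lam using fun i => hpartner i δ (by positivity)
  obtain ⟨k, hk⟩ := exists_pow_forall_le_norm_pow_sub_pow S (fun i _ => hmod i)
    (fun i _ => hmod (p i)) (fun i _ => hp_ne i) fun i _ => (hp_lam i).le.trans (min_le_left _ _)
  obtain ⟨z, hzx, hzy⟩ := exists_norm_sub_sum_le_sum (T ^ k) S fun i hi =>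
    exists_norm_sub_smul_le_of_le_norm_pow_sub_pow T (heig i) (heig (p i)) (hmod i) (hmod (p i))
      hc (hk i hi) (a i) (b i)
  have herr : ∑ i ∈ S, (‖a i‖ + ‖b i‖) / c * ‖u (p i) - u i‖ < ε := by
    calc ∑ i ∈ S, (‖a i‖ + ‖b i‖) / c * ‖u (p i) - u i‖
        ≤ ∑ i ∈ S, (‖a i‖ + ‖b i‖) / c * (ε * c / (A + 1)) :=
          sum_le_sum fun i _ => by gcongr; exact (hp_u i).le.trans (min_le_right _ _)
      _ = A * (ε / (A + 1)) := by
          rw [sum_mul]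
          exact sum_congr rfl fun i _ => by field_simp
      _ < ε := by
          rw [mul_div_assoc', div_lt_iff₀ (by positivity)]
          nlinarith
  exact ⟨z, k, by rw [dist_eq_norm]; linarith, by rw [dist_eq_norm]; linarith⟩

theorem hypercyclic_of_unimodular_eigenvectors_general
    {X : Type*} [NormedAddCommGroup X] [NormedSpace ℂ X] [CompleteSpace X]
    [TopologicalSpace.SeparableSpace X]
    (T : X →L[ℂ] X) (u : ℕ → X) (lam : ℕ → ℂ)
    (hu : ∀ n, u n ≠ 0)
    (heig : ∀ n, T (u n) = lam n • u n)
    (hmod : ∀ n, ‖lam n‖ = 1)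
    (hdist : Function.Injective lam)
    (hspan : Dense (Submodule.span ℂ (Set.range u) : Set X))
    (happrox : ∀ n : ℕ, ∀ ε > (0 : ℝ), ∃ m, m ≠ n ∧ ‖u n - u m‖ < ε) :
    ∃ f : X, Dense (Set.range fun n : ℕ => (T ^ n) f) := by
  have hpartner : ∀ n, ∀ δ > (0 : ℝ), ∃ m, lam m ≠ lam n ∧ ‖u m - u n‖ < δ ∧ ‖lam m - lam n‖ < δ :=
    fun n _ hδ => exists_eigenvalue_near_of_eigenvector_near T heig hdist happrox (hu n) hδ
  exact exists_dense_range_of_dense_iUnion_preimage (fun n => ⇑(T ^ n))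
    (fun n => (T ^ n).continuous) fun U hU hUne => dense_iUnion_preimage_of_forall_exists_dist_lt _ hspan
      (fun x hx y hy ε hε => exists_dist_lt_of_mem_span T heig hmod hpartner hx hy hε) hU hUne

/-- Grivaux's criterion: if a bounded operator on a complex separable
infinite-dimensional Banach space has a sequence of eigenvectors with pairwise distinct
unimodular eigenvalues, whose span is dense, and such that each eigenvector can be
approximated arbitrarily well by other eigenvectors of the family, then `T` is hypercyclic. -/
theorem hypercyclic_of_unimodular_eigenvectors
    {X : Type*} [NormedAddCommGroup X] [NormedSpace ℂ X] [CompleteSpace X]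
    [TopologicalSpace.SeparableSpace X] (hX : ¬ FiniteDimensional ℂ X)
    (T : X →L[ℂ] X) (u : ℕ → X) (lam : ℕ → ℂ)
    (hu : ∀ n, u n ≠ 0)
    (heig : ∀ n, T (u n) = lam n • u n)
    (hmod : ∀ n, ‖lam n‖ = 1)
    (hdist : Function.Injective lam)
    (hspan : Dense (Submodule.span ℂ (Set.range u) : Set X))
    (happrox : ∀ n : ℕ, ∀ ε > (0 : ℝ), ∃ m, m ≠ n ∧ ‖u n - u m‖ < ε) :
    ∃ f : X, Dense (Set.range fun n : ℕ => (T ^ n) f) :=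
  hypercyclic_of_unimodular_eigenvectors_general T u lam hu heig hmod hdist hspan happrox
end

section
/- Let X be an infinite-dimensional complex Banach space and let R be a bounded linear operator on X of finite rank (i.e. the range of R is finite-dimensional). Then the operator I + R, where I is the identity operator, is not hypercyclic. -/
/-- If `R` is a finite rank bounded operator on an infinite-dimensional complex Banach
space, then `I + R` is not hypercyclic. -/
theorem not_hypercyclic_id_add_finite_rank
    {X : Type*} [NormedAddCommGroup X] [NormedSpace ℂ X] [CompleteSpace X]
    (hX : ¬ FiniteDimensional ℂ X)
    (R : X →L[ℂ] X) (hR : FiniteDimensional ℂ (LinearMap.range (R : X →ₗ[ℂ] X))) :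
    ¬ ∃ f : X, Dense (Set.range fun n : ℕ => ((ContinuousLinearMap.id ℂ X + R) ^ n) f) := by
  rintro ⟨f, hf⟩
  set M : Submodule ℂ X := LinearMap.range (R : X →ₗ[ℂ] X) with hM
  set T : X →L[ℂ] X := ContinuousLinearMap.id ℂ X + R with hT
  -- The orbit stays in f + M
  have key : ∀ n : ℕ, (T ^ n) f - f ∈ M := by
    intro n
    induction n with
    | zero => simp
    | succ n ih =>
      have h1 : (T ^ (n + 1)) f = (T ^ n) f + R ((T ^ n) f) := by
        rw [pow_succ']
        simp [hT, ContinuousLinearMap.add_apply]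
      rw [h1]
      have : (T ^ n) f + R ((T ^ n) f) - f = ((T ^ n) f - f) + R ((T ^ n) f) := by abel
      rw [this]
      exact M.add_mem ih ⟨(T ^ n) f, rfl⟩
  -- M is closed
  have hMclosed : IsClosed (M : Set X) := Submodule.closed_of_finiteDimensional M
  -- The set S = { x | x - f ∈ M } is closed and contains the orbit
  have hSclosed : IsClosed {x : X | x - f ∈ M} :=
    hMclosed.preimage (continuous_sub_right f)
  have hsub : Set.range (fun n : ℕ => (T ^ n) f) ⊆ {x : X | x - f ∈ M} := by
    rintro _ ⟨n, rfl⟩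
    exact key n
  have hall : ∀ x : X, x - f ∈ M := by
    intro x
    have := hf.closure_eq
    have hx : x ∈ closure (Set.range fun n : ℕ => (T ^ n) f) := by
      rw [this]; trivial
    exact hSclosed.closure_subset_iff.mpr hsub hx
  have hMtop : M = ⊤ := by
    rw [Submodule.eq_top_iff']
    intro x
    have := hall (x + f)
    simpa using this
  apply hX
  rw [hMtop] at hR
  exact (Submodule.topEquiv (R := ℂ) (M := X)).finiteDimensional
end

section
/- For each m ∈ {1, …, N} the function k_m(x) = (1 − θ(x))/(x − t_m) = 2i/((S(x) + i)(x − t_m)), defined for almost every real x, belongs to L²(ℝ), and for m ≠ n the functions k_m and k_n are orthogonal in L²(ℝ): ∫_ℝ k_m(x)·conj(k_n(x)) dx = 0. -/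
/-!
Clearing denominators, `k_m = -2i Q_m / D` almost everywhere, where `Q_u = ∏_{j ∉ u} (t_j - z)`
and `D = ∑ μ_n Q_{n} + i Q_∅` is the polynomial `(S + i) ∏_j (t_j - z)`. Since `Im S ≥ 0` on the
closed upper half-plane, `‖S + i‖ ≥ 1` there; with `D(t_j) = μ_j ∏_{i ≠ j} (t_i - t_j) ≠ 0`
this shows that `D` has no zeros there, and `‖Q_u / D‖ ≤ 1 / ∏_{j ∈ u} ‖t_j - z‖`. For `u = {m}` this gives `k_m = O(1/x)`, hence
`k_m ∈ L²`. For `m ≠ n` one computes `k_m · conj k_n = G + conj G` with `G = 2i Q_{m,n} / D`,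
which is holomorphic on the closed upper half-plane and `O(‖z‖⁻²)` there, so `∫_ℝ G = 0` by
Cauchy's theorem on the squares `[-r, r] × [0, r]`.
-/

open MeasureTheory Filter Complex Finset

theorem integrable_of_norm_le_div_sq {E : Type*} [NormedAddCommGroup E] {f : ℝ → E}
    (hf : Continuous f) {C R : ℝ} (hbound : ∀ x, R ≤ |x| → ‖f x‖ ≤ C / x ^ 2) :
    Integrable f := by
  refine hf.locallyIntegrable.integrable_of_isBigO_cocompact ?_
    (integrable_inv_one_add_sq.integrableAtFilter _)
  refine Asymptotics.IsBigO.of_bound (2 * |C|) ?_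
  filter_upwards [tendsto_norm_cocompact_atTop.eventually_ge_atTop (max R 1)] with x hx
  rw [Real.norm_eq_abs] at hx
  have hx1 : 1 ≤ x ^ 2 := by nlinarith [sq_abs x, le_max_right R 1, abs_nonneg x]
  rw [Real.norm_of_nonneg (by positivity), ← div_eq_mul_inv]
  calc ‖f x‖ ≤ C / x ^ 2 := hbound x (le_of_max_le_left hx)
    _ ≤ |C| / x ^ 2 := by gcongr; exact le_abs_self C
    _ ≤ 2 * |C| / (1 + x ^ 2) := by
      rw [div_le_div_iff₀ (by positivity) (by positivity)]
      nlinarith [abs_nonneg C]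

theorem norm_intervalIntegral_neg_le_of_upperHalfPlane {E : Type*} [NormedAddCommGroup E]
    [NormedSpace ℂ E] [CompleteSpace E] {f : ℂ → E}
    (hf : DifferentiableOn ℂ f {z | 0 ≤ z.im}) {r M : ℝ} (hr : 0 ≤ r)
    (hbound : ∀ z : ℂ, 0 ≤ z.im → r ≤ ‖z‖ → ‖f z‖ ≤ M) :
    ‖∫ x in -r..r, f x‖ ≤ 4 * r * M := by
  -- Cauchy's theorem on `[-r, r] × [0, r]` trades the real segment for the other three sides.
  have hrect := integral_boundary_rect_eq_zero_of_differentiableOn f ⟨-r, 0⟩ ⟨r, r⟩ <|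
    hf.mono fun z hz => by
      have := (mem_reProdIm.mp hz).2
      rw [Set.uIcc_of_le hr] at this
      exact this.1
  simp only [ofReal_zero, zero_mul, add_zero] at hrect
  have htop : ‖∫ x in -r..r, f (x + r * I)‖ ≤ M * |r - -r| :=
    intervalIntegral.norm_integral_le_of_norm_le_const fun x _ =>
      hbound _ (by simp [hr]) (by simpa [abs_of_nonneg hr] using abs_im_le_norm (x + r * I))
  have hside : ∀ c : ℝ, |c| = r → ‖∫ y in (0:ℝ)..r, f (c + y * I)‖ ≤ M * |r - 0| :=
    fun c hc => intervalIntegral.norm_integral_le_of_norm_le_const fun y hy => by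
      have hy0 : 0 ≤ y := by
        rw [Set.uIoc_of_le hr] at hy; exact hy.1.le
      exact hbound _ (by simpa using hy0) (by simpa [hc] using abs_re_le_norm (c + y * I))
  have hsplit : ∫ x in -r..r, f x = (∫ x in -r..r, f (x + r * I))
      + I • (∫ y in (0:ℝ)..r, f (-r + y * I)) - I • ∫ y in (0:ℝ)..r, f (r + y * I) := by
    rw [← sub_eq_zero, ← hrect]; push_cast; abel
  rw [hsplit]
  have hs1 := hside r (abs_of_nonneg hr)
  have hs2 := hside (-r) (by rw [abs_neg, abs_of_nonneg hr])
  push_cast at hs2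
  calc _ ≤ ‖∫ x in -r..r, f (x + r * I)‖ + ‖I • ∫ y in (0:ℝ)..r, f (-r + y * I)‖
        + ‖I • ∫ y in (0:ℝ)..r, f (r + y * I)‖ := norm_sub_le_of_le (norm_add_le _ _) le_rfl
    _ ≤ M * |r - -r| + M * |r - 0| + M * |r - 0| := by
      rw [norm_smul, norm_smul, norm_I, one_mul, one_mul]; gcongr
    _ = 4 * r * M := by
      rw [sub_zero, sub_neg_eq_add, abs_of_nonneg hr, abs_of_nonneg (by linarith)]; ring

theorem integrable_ofReal_of_norm_le_div_sq {E : Type*} [NormedAddCommGroup E] {f : ℂ → E}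
    (hf : ContinuousOn f {z | 0 ≤ z.im}) {C R : ℝ}
    (hbound : ∀ z : ℂ, 0 ≤ z.im → R ≤ ‖z‖ → ‖f z‖ ≤ C / ‖z‖ ^ 2) :
    Integrable fun x : ℝ => f x :=
  integrable_of_norm_le_div_sq (hf.comp_continuous continuous_ofReal fun x => by simp)
    fun x hx => by simpa [sq_abs] using hbound x (by simp) (by simpa using hx)

theorem integral_eq_zero_of_differentiableOn_upperHalfPlane {f : ℂ → ℂ}
    (hf : DifferentiableOn ℂ f {z | 0 ≤ z.im}) {C R : ℝ}
    (hbound : ∀ z : ℂ, 0 ≤ z.im → R ≤ ‖z‖ → ‖f z‖ ≤ C / ‖z‖ ^ 2) :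
    ∫ x : ℝ, f x = 0 := by
  have hint := integrable_ofReal_of_norm_le_div_sq hf.continuousOn hbound
  have hsquare : ∀ r ≥ max R 1, ‖∫ x in -r..r, f x‖ ≤ 4 * |C| / r := fun r hr => by
    have hr0 : 0 < r := lt_of_lt_of_le one_pos (le_of_max_le_right hr)
    refine (norm_intervalIntegral_neg_le_of_upperHalfPlane hf hr0.le (M := |C| / r ^ 2)
      fun z hz hrz => ?_).trans_eq (by field_simp)
    calc ‖f z‖ ≤ C / ‖z‖ ^ 2 := hbound z hz ((le_of_max_le_left hr).trans hrz)
      _ ≤ |C| / ‖z‖ ^ 2 := by gcongr; exact le_abs_self C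
      _ ≤ |C| / r ^ 2 := by gcongr
  refine tendsto_nhds_unique
    (intervalIntegral_tendsto_integral hint tendsto_neg_atTop_atBot tendsto_id) ?_
  refine squeeze_zero_norm' (eventually_atTop.mpr ⟨_, hsquare⟩) ?_
  exact tendsto_const_nhds.div_atTop tendsto_id

noncomputable section

namespace Clark

def nodePoly (t : ℕ → ℝ) (s : Finset ℕ) (z : ℂ) : ℂ := ∏ j ∈ s, ((t j : ℂ) - z)

def cauchyTransform (N : ℕ) (t μ : ℕ → ℝ) (z : ℂ) : ℂ := ∑ n ∈ range N, (μ n : ℂ) / ((t n : ℂ) - z)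

/-- `(S(z) + i) ∏_j (t_j - z)`, written without the poles of `S`. -/
def denom (N : ℕ) (t μ : ℕ → ℝ) (z : ℂ) : ℂ :=
  ∑ n ∈ range N, (μ n : ℂ) * nodePoly t ((range N).erase n) z + I * nodePoly t (range N) z

/-- `((S(z) + i) ∏_{j ∈ u} (t_j - z))⁻¹` (see `nodeQuot_eq_inv`), with its removable
singularities at the nodes filled in. -/
def nodeQuot (N : ℕ) (t μ : ℕ → ℝ) (u : Finset ℕ) (z : ℂ) : ℂ :=
  nodePoly t (range N \ u) z / denom N t μ z

variable {N : ℕ} {t μ : ℕ → ℝ}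

theorem differentiable_nodePoly (s : Finset ℕ) : Differentiable ℂ (nodePoly t s) :=
  Differentiable.fun_finsetProd fun _ _ => (differentiable_const _).sub differentiable_id

theorem differentiable_denom : Differentiable ℂ (denom N t μ) :=
  (Differentiable.fun_sum fun _ _ => (differentiable_const _).mul (differentiable_nodePoly _)).add
    ((differentiable_const _).mul (differentiable_nodePoly _))

theorem nodePoly_ne_zero {s : Finset ℕ} {z : ℂ} (hz : ∀ j ∈ s, (t j : ℂ) ≠ z) :
    nodePoly t s z ≠ 0 :=
  prod_ne_zero_iff.mpr fun j hj => sub_ne_zero.mpr (hz j hj)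

theorem pow_half_norm_le_norm_nodePoly {s : Finset ℕ} {z : ℂ} (hz : ∀ j ∈ s, 2 * |t j| ≤ ‖z‖) :
    (‖z‖ / 2) ^ s.card ≤ ‖nodePoly t s z‖ := by
  rw [nodePoly, norm_prod, ← prod_const]
  refine prod_le_prod (fun _ _ => by positivity) fun j hj => ?_
  have := norm_sub_norm_le z (t j : ℂ)
  rw [norm_real, Real.norm_eq_abs, norm_sub_rev] at this
  linarith [hz j hj]

theorem sub_mul_nodePoly_erase {s : Finset ℕ} {j : ℕ} (hj : j ∈ s) (z : ℂ) :
    ((t j : ℂ) - z) * nodePoly t (s.erase j) z = nodePoly t s z :=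
  mul_prod_erase s (fun i => (t i : ℂ) - z) hj

theorem nodePoly_sdiff_mul {s u : Finset ℕ} (hu : u ⊆ s) (z : ℂ) :
    nodePoly t (s \ u) z * nodePoly t u z = nodePoly t s z :=
  prod_sdiff hu

theorem nodePoly_node_eq_zero {s : Finset ℕ} {j : ℕ} (hj : j ∈ s) : nodePoly t s (t j) = 0 :=
  prod_eq_zero hj (sub_self _)

theorem denom_eq_mul {z : ℂ} (hz : ∀ j ∈ range N, (t j : ℂ) ≠ z) :
    denom N t μ z = (cauchyTransform N t μ z + I) * nodePoly t (range N) z := by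
  rw [denom, cauchyTransform, add_mul, sum_mul]
  congr 1
  refine sum_congr rfl fun n hn => ?_
  rw [← sub_mul_nodePoly_erase hn]
  field_simp [sub_ne_zero.mpr (hz n hn)]

theorem denom_apply_node {j : ℕ} (hj : j ∈ range N) :
    denom N t μ (t j) = μ j * nodePoly t ((range N).erase j) (t j) := by
  rw [denom, sum_eq_single j, nodePoly_node_eq_zero hj, mul_zero, add_zero]
  · exact fun n _ hnj => by rw [nodePoly_node_eq_zero (mem_erase.mpr ⟨Ne.symm hnj, hj⟩), mul_zero]
  · exact fun h => absurd hj h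

theorem im_cauchyTransform_nonneg (hμ : ∀ n < N, 0 ≤ μ n) {z : ℂ} (hz : 0 ≤ z.im) :
    0 ≤ (cauchyTransform N t μ z).im := by
  rw [cauchyTransform, im_sum]
  refine sum_nonneg fun n hn => ?_
  simp only [div_im, ofReal_re, ofReal_im, sub_im, sub_re, zero_mul, zero_sub, zero_div]
  rw [mul_neg, neg_div, neg_neg]
  exact div_nonneg (mul_nonneg (hμ n (mem_range.mp hn)) hz) (normSq_nonneg _)

theorem one_le_norm_add_I {w : ℂ} (hw : 0 ≤ w.im) : 1 ≤ ‖w + I‖ :=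
  calc 1 ≤ (w + I).im := by simp [hw]
    _ ≤ ‖w + I‖ := (le_abs_self _).trans (abs_im_le_norm _)

theorem denom_ne_zero (ht : Set.InjOn t (range N)) (hμ : ∀ n < N, 0 < μ n) {z : ℂ}
    (hz : 0 ≤ z.im) : denom N t μ z ≠ 0 := by
  by_cases hpoles : ∀ j ∈ range N, (t j : ℂ) ≠ z
  · rw [denom_eq_mul hpoles]
    refine mul_ne_zero (norm_pos_iff.mp ?_) (nodePoly_ne_zero hpoles)
    exact one_pos.trans_le
      (one_le_norm_add_I (im_cauchyTransform_nonneg (fun n hn => (hμ n hn).le) hz))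
  · push Not at hpoles
    obtain ⟨j, hj, rfl⟩ := hpoles
    rw [denom_apply_node hj]
    refine mul_ne_zero (ofReal_ne_zero.mpr (hμ j (mem_range.mp hj)).ne') (nodePoly_ne_zero ?_)
    intro i hi
    exact ofReal_injective.ne fun h => (mem_erase.mp hi).1 (ht (mem_erase.mp hi).2 hj h)

theorem differentiableOn_nodeQuot (ht : Set.InjOn t (range N)) (hμ : ∀ n < N, 0 < μ n)
    (u : Finset ℕ) : DifferentiableOn ℂ (nodeQuot N t μ u) {z | 0 ≤ z.im} :=
  ((differentiable_nodePoly _).differentiableOn).div differentiable_denom.differentiableOn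
    fun _ hz => denom_ne_zero ht hμ hz

theorem continuous_nodeQuot_ofReal (ht : Set.InjOn t (range N)) (hμ : ∀ n < N, 0 < μ n)
    (u : Finset ℕ) : Continuous fun x : ℝ => nodeQuot N t μ u x :=
  (differentiableOn_nodeQuot ht hμ u).continuousOn.comp_continuous continuous_ofReal
    fun x => by simp

theorem nodeQuot_eq_inv (hμ : ∀ n < N, 0 ≤ μ n) {u : Finset ℕ} (hu : u ⊆ range N) {z : ℂ}
    (hz : 0 ≤ z.im) (hpoles : ∀ j ∈ range N, (t j : ℂ) ≠ z) :
    nodeQuot N t μ u z = ((cauchyTransform N t μ z + I) * nodePoly t u z)⁻¹ := by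
  have hSI : cauchyTransform N t μ z + I ≠ 0 := norm_pos_iff.mp <|
    one_pos.trans_le (one_le_norm_add_I (im_cauchyTransform_nonneg hμ hz))
  have hrest : nodePoly t (range N \ u) z ≠ 0 :=
    nodePoly_ne_zero fun j hj => hpoles j (sdiff_subset hj)
  rw [nodeQuot, denom_eq_mul hpoles, ← nodePoly_sdiff_mul hu]
  field_simp

theorem norm_nodeQuot_le (hμ : ∀ n < N, 0 ≤ μ n) {u : Finset ℕ} (hu : u ⊆ range N) {z : ℂ}
    (hz : 0 ≤ z.im) (hlarge : ∀ j ∈ range N, 2 * |t j| < ‖z‖) :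
    ‖nodeQuot N t μ u z‖ ≤ (2 / ‖z‖) ^ u.card := by
  have hpoles : ∀ j ∈ range N, (t j : ℂ) ≠ z := fun j hj h => by
    have := hlarge j hj
    rw [← h, norm_real, Real.norm_eq_abs] at this
    linarith [abs_nonneg (t j)]
  have hlow := pow_half_norm_le_norm_nodePoly (s := u) fun j hj => (hlarge j (hu hj)).le
  have hpos : 0 < (‖z‖ / 2) ^ u.card := by
    obtain rfl | ⟨j, hj⟩ := u.eq_empty_or_nonempty
    · simp
    · have := hlarge j (hu hj)
      exact pow_pos (by linarith [abs_nonneg (t j)]) _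
  have hSI := one_le_norm_add_I (im_cauchyTransform_nonneg hμ hz (t := t))
  calc ‖nodeQuot N t μ u z‖ = ‖cauchyTransform N t μ z + I‖⁻¹ * ‖nodePoly t u z‖⁻¹ := by
        rw [nodeQuot_eq_inv hμ hu hz hpoles, norm_inv, norm_mul, mul_inv]
    _ ≤ 1 * ((‖z‖ / 2) ^ u.card)⁻¹ := by gcongr; exact inv_le_one_of_one_le₀ hSI
    _ = (2 / ‖z‖) ^ u.card := by rw [one_mul, ← inv_pow, inv_div]

theorem exists_norm_nodeQuot_le (hμ : ∀ n < N, 0 ≤ μ n) {u : Finset ℕ} (hu : u ⊆ range N) :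
    ∃ R, ∀ z : ℂ, 0 ≤ z.im → R ≤ ‖z‖ → ‖nodeQuot N t μ u z‖ ≤ (2 / ‖z‖) ^ u.card :=
  ⟨2 * ∑ j ∈ range N, |t j| + 1, fun z hz hR => norm_nodeQuot_le hμ hu hz fun j hj => by
    linarith [single_le_sum (f := fun i => |t i|) (fun i _ => abs_nonneg (t i)) hj]⟩

theorem cauchyTransform_ofReal (x : ℝ) :
    cauchyTransform N t μ x = ((∑ n ∈ range N, μ n / (t n - x) : ℝ) : ℂ) := by
  simp [cauchyTransform]

theorem ofReal_add_I_ne_zero (s : ℝ) : (s : ℂ) + I ≠ 0 := fun h => by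
  simpa using congrArg im h

theorem one_sub_cayley (s : ℝ) : 1 - ((s : ℂ) - I) / ((s : ℂ) + I) = 2 * I / ((s : ℂ) + I) := by
  field_simp [ofReal_add_I_ne_zero s]
  ring

theorem cayley_div_sub_eq_nodeQuot (hμ : ∀ n < N, 0 ≤ μ n) {m : ℕ} (hm : m ∈ range N) {x : ℝ}
    (hpoles : ∀ j ∈ range N, (t j : ℂ) ≠ x) :
    (1 - (cauchyTransform N t μ x - I) / (cauchyTransform N t μ x + I)) / ((x : ℂ) - t m)
      = -2 * I * nodeQuot N t μ {m} x := by
  rw [nodeQuot_eq_inv hμ (singleton_subset_iff.mpr hm) (by simp) hpoles, nodePoly,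
    prod_singleton, cauchyTransform_ofReal, one_sub_cayley]
  generalize (∑ n ∈ range N, μ n / (t n - x) : ℝ) = s
  have hxm : (x : ℂ) - t m ≠ 0 := sub_ne_zero.mpr (hpoles m hm).symm
  have hmx : (t m : ℂ) - x ≠ 0 := sub_ne_zero.mpr (hpoles m hm)
  field_simp [ofReal_add_I_ne_zero s]
  ring

-- Both sides equal `4 / ((s² + 1) a b)`.
theorem cayley_kernel_mul_conj (s a b : ℝ) (ha : a ≠ 0) (hb : b ≠ 0) :
    -2 * I * (((s : ℂ) + I) * a)⁻¹ * starRingEnd ℂ (-2 * I * (((s : ℂ) + I) * b)⁻¹)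
      = 2 * I * (((s : ℂ) + I) * (a * b))⁻¹
        + starRingEnd ℂ (2 * I * (((s : ℂ) + I) * (a * b))⁻¹) := by
  have hs : (s : ℂ) - I ≠ 0 := fun h => by simpa using congrArg im h
  have ha' : (a : ℂ) ≠ 0 := ofReal_ne_zero.mpr ha
  have hb' : (b : ℂ) ≠ 0 := ofReal_ne_zero.mpr hb
  simp only [map_mul, map_inv₀, map_add, map_neg, conj_ofReal, conj_I, map_ofNat, ← sub_eq_add_neg]
  field_simp [ofReal_add_I_ne_zero s]
  ring

theorem nodeQuot_pair_mul_conj (hμ : ∀ n < N, 0 ≤ μ n) {m n : ℕ} (hm : m ∈ range N)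
    (hn : n ∈ range N) (hmn : m ≠ n) {x : ℝ} (hpoles : ∀ j ∈ range N, (t j : ℂ) ≠ x) :
    -2 * I * nodeQuot N t μ {m} x * starRingEnd ℂ (-2 * I * nodeQuot N t μ {n} x)
      = 2 * I * nodeQuot N t μ {m, n} x + starRingEnd ℂ (2 * I * nodeQuot N t μ {m, n} x) := by
  have hx : (0 : ℝ) ≤ (x : ℂ).im := by simp
  rw [nodeQuot_eq_inv hμ (singleton_subset_iff.mpr hm) hx hpoles,
    nodeQuot_eq_inv hμ (singleton_subset_iff.mpr hn) hx hpoles,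
    nodeQuot_eq_inv hμ (insert_subset hm (singleton_subset_iff.mpr hn)) hx hpoles,
    nodePoly, nodePoly, nodePoly, prod_singleton, prod_singleton, prod_pair hmn,
    cauchyTransform_ofReal]
  simp only [← ofReal_sub]
  exact cayley_kernel_mul_conj _ _ _ (sub_ne_zero.mpr (by exact_mod_cast hpoles m hm))
    (sub_ne_zero.mpr (by exact_mod_cast hpoles n hn))

theorem memLp_nodeQuot_singleton (ht : Set.InjOn t (range N)) (hμ : ∀ n < N, 0 < μ n) {m : ℕ}
    (hm : m ∈ range N) : MemLp (fun x : ℝ => nodeQuot N t μ {m} x) 2 := by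
  have hcont := continuous_nodeQuot_ofReal ht hμ {m}
  obtain ⟨R, hR⟩ := exists_norm_nodeQuot_le (fun n hn => (hμ n hn).le) (singleton_subset_iff.mpr hm)
  rw [memLp_two_iff_integrable_sq_norm hcont.aestronglyMeasurable]
  refine integrable_of_norm_le_div_sq (hcont.norm.pow 2) (C := 4) (R := R) fun x hx => ?_
  have hq := hR x (by simp) (by simpa using hx)
  rw [card_singleton, pow_one, norm_real, Real.norm_eq_abs] at hq
  calc ‖‖nodeQuot N t μ {m} x‖ ^ 2‖ = ‖nodeQuot N t μ {m} x‖ ^ 2 := by rw [norm_pow, norm_norm]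
    _ ≤ (2 / |x|) ^ 2 := by gcongr
    _ = 4 / x ^ 2 := by rw [div_pow, sq_abs]; norm_num

theorem exists_norm_nodeQuot_pair_le (hμ : ∀ n < N, 0 ≤ μ n) {m n : ℕ} (hm : m ∈ range N)
    (hn : n ∈ range N) (hmn : m ≠ n) :
    ∃ R, ∀ z : ℂ, 0 ≤ z.im → R ≤ ‖z‖ → ‖nodeQuot N t μ {m, n} z‖ ≤ 4 / ‖z‖ ^ 2 := by
  obtain ⟨R, hR⟩ := exists_norm_nodeQuot_le hμ (insert_subset hm (singleton_subset_iff.mpr hn))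
  exact ⟨R, fun z hz hRz => (hR z hz hRz).trans_eq (by rw [card_pair hmn, div_pow]; norm_num)⟩

theorem integrable_nodeQuot_pair (ht : Set.InjOn t (range N)) (hμ : ∀ n < N, 0 < μ n)
    {m n : ℕ} (hm : m ∈ range N) (hn : n ∈ range N) (hmn : m ≠ n) :
    Integrable fun x : ℝ => nodeQuot N t μ {m, n} x :=
  have ⟨_, hR⟩ := exists_norm_nodeQuot_pair_le (fun n hn => (hμ n hn).le) hm hn hmn
  integrable_ofReal_of_norm_le_div_sq (differentiableOn_nodeQuot ht hμ _).continuousOn hR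

theorem integral_nodeQuot_pair (ht : Set.InjOn t (range N)) (hμ : ∀ n < N, 0 < μ n)
    {m n : ℕ} (hm : m ∈ range N) (hn : n ∈ range N) (hmn : m ≠ n) :
    ∫ x : ℝ, nodeQuot N t μ {m, n} x = 0 :=
  have ⟨_, hR⟩ := exists_norm_nodeQuot_pair_le (fun n hn => (hμ n hn).le) hm hn hmn
  integral_eq_zero_of_differentiableOn_upperHalfPlane (differentiableOn_nodeQuot ht hμ _) hR

theorem ae_ofReal_ne_nodes (N : ℕ) (t : ℕ → ℝ) : ∀ᵐ x : ℝ, ∀ j ∈ range N, (t j : ℂ) ≠ x :=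
  (eventually_all_finset _).mpr fun j _ =>
    (volume.ae_ne (t j)).mono fun x hx => by exact_mod_cast hx.symm

end Clark

end

open Clark in
theorem clark_kernels_orthogonal_general
    (N : ℕ) (t : ℕ → ℝ) (ht : ∀ i j, i < j → j < N → t i < t j)
    (μ : ℕ → ℝ) (hμ : ∀ n < N, 0 < μ n)
    (S : ℝ → ℝ) (hS : ∀ x, S x = ∑ n ∈ Finset.range N, μ n / (t n - x))
    (θ : ℝ → ℂ) (hθ : ∀ x, θ x = ((S x : ℂ) - Complex.I) / ((S x : ℂ) + Complex.I))
    (k : ℕ → ℝ → ℂ) (hk : ∀ m x, k m x = (1 - θ x) / ((x : ℂ) - (t m : ℂ))) :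
    (∀ m, m < N → MemLp (k m) 2 (volume : Measure ℝ)) ∧
    (∀ m n, m < N → n < N → m ≠ n →
      ∫ x : ℝ, k m x * (starRingEnd ℂ) (k n x) = 0) := by
  have hinj : Set.InjOn t (range N) := by
    rw [coe_range]
    exact StrictMonoOn.injOn fun i _ j hj hij => ht i j hij hj
  have hμ0 : ∀ n < N, 0 ≤ μ n := fun n hn => (hμ n hn).le
  have hrep : ∀ m ∈ range N, k m =ᵐ[volume] fun x : ℝ => -2 * I * nodeQuot N t μ {m} x :=
    fun m hm => by
      filter_upwards [ae_ofReal_ne_nodes N t] with x hx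
      rw [hk, hθ, hS, ← cauchyTransform_ofReal]
      exact cayley_div_sub_eq_nodeQuot hμ0 hm hx
  refine ⟨fun m hm => (memLp_congr_ae (hrep m (mem_range.mpr hm))).mpr
    ((memLp_nodeQuot_singleton hinj hμ (mem_range.mpr hm)).const_mul _), fun m n hm hn hmn => ?_⟩
  rw [← mem_range] at hm hn
  have hG := (integrable_nodeQuot_pair hinj hμ hm hn hmn).const_mul (2 * I)
  have hGconj : Integrable fun x : ℝ => starRingEnd ℂ (2 * I * nodeQuot N t μ {m, n} x) :=
    conjCLE.toContinuousLinearMap.integrable_comp hG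
  calc ∫ x : ℝ, k m x * starRingEnd ℂ (k n x)
      = ∫ x : ℝ, 2 * I * nodeQuot N t μ {m, n} x
          + starRingEnd ℂ (2 * I * nodeQuot N t μ {m, n} x) := by
        refine integral_congr_ae ?_
        filter_upwards [hrep m hm, hrep n hn, ae_ofReal_ne_nodes N t] with x hkm hkn hx
        rw [hkm, hkn]
        exact nodeQuot_pair_mul_conj hμ0 hm hn hmn hx
    _ = 0 := by
      rw [integral_add hG hGconj, integral_conj,
        integral_const_mul, integral_nodeQuot_pair hinj hμ hm hn hmn]
      simp

/-- With `S(x) = ∑_{n<N} μ n / (t n - x)` and `θ = (S - i)/(S + i)`, the boundary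
reproducing kernels `k m (x) = (1 - θ(x))/(x - t m)` belong to `L²(ℝ)` and are pairwise
orthogonal there. -/
theorem clark_kernels_orthogonal
    (N : ℕ) (hN : 1 ≤ N) (t : ℕ → ℝ) (ht : ∀ i j, i < j → j < N → t i < t j)
    (μ : ℕ → ℝ) (hμ : ∀ n < N, 0 < μ n)
    (S : ℝ → ℝ) (hS : ∀ x, S x = ∑ n ∈ Finset.range N, μ n / (t n - x))
    (θ : ℝ → ℂ) (hθ : ∀ x, θ x = ((S x : ℂ) - Complex.I) / ((S x : ℂ) + Complex.I))
    (k : ℕ → ℝ → ℂ) (hk : ∀ m x, k m x = (1 - θ x) / ((x : ℂ) - (t m : ℂ))) :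
    (∀ m, m < N → MemLp (k m) 2 (volume : Measure ℝ)) ∧
    (∀ m n, m < N → n < N → m ≠ n →
      ∫ x : ℝ, k m x * (starRingEnd ℂ) (k n x) = 0) :=
  clark_kernels_orthogonal_general N t ht μ hμ S hS θ hθ k hk
end

section
/- Let s ∈ ℝ ∖ {t_1, …, t_N} be such that F(s) = ε for some ε > 0. For c > 0 define G_c(x) = F(x) + c/(s − x). Then there exist δ > 0 and a function λ : (0, δ) → ℝ with λ(c) ∉ {t_1, …, t_N, s}, G_c(λ(c)) = 0 for all c ∈ (0, δ), λ(c) → s as c → 0⁺, and lim_{c→0⁺} (λ(c) − s)/c = 1/ε. In other words, the new zero created near the added pole s satisfies λ(c) = s + c/ε + o(c) as c → 0⁺. -/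
/-!
Zeros of `G_c` are the solutions of `(x - s) * F x = c`. The left-hand side vanishes at `s`
and has derivative `F s = ε ≠ 0` there, so by the inverse function theorem it has a local
inverse `λ` near `0` with `λ 0 = s` and `λ' 0 = 1/ε`; the claimed limits are continuity and
differentiability of `λ` at `0`.
-/

open Filter
open scoped Topology

variable {𝕜 : Type*} [NontriviallyNormedField 𝕜]

theorem hasStrictDerivAt_sum_div_sub {ι : Type*} (S : Finset ι) (a t : ι → 𝕜) {s : 𝕜}
    (hs : ∀ i ∈ S, s ≠ t i) :
    HasStrictDerivAt (fun x => ∑ i ∈ S, a i / (t i - x)) (∑ i ∈ S, a i / (t i - s) ^ 2) s := by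
  refine HasStrictDerivAt.fun_sum fun i hi => ?_
  have hne : t i - s ≠ 0 := sub_ne_zero.mpr (hs i hi).symm
  refine ((hasStrictDerivAt_const s (a i)).div
    ((hasStrictDerivAt_id s).const_sub (t i)) hne).congr_deriv ?_
  simp only [id]
  ring

theorem HasStrictDerivAt.id_sub_const_mul {F : 𝕜 → 𝕜} {F' s : 𝕜}
    (hF : HasStrictDerivAt F F' s) :
    HasStrictDerivAt (fun x => (x - s) * F x) (F s) s := by
  refine (((hasStrictDerivAt_id s).sub (hasStrictDerivAt_const s s)).mul hF).congr_deriv ?_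
  simp

theorem HasStrictDerivAt.exists_right_inverse [CompleteSpace 𝕜] {f : 𝕜 → 𝕜} {f' a : 𝕜}
    (hf : HasStrictDerivAt f f' a) (hf' : f' ≠ 0) :
    ∃ g : 𝕜 → 𝕜, g (f a) = a ∧ HasStrictDerivAt g f'⁻¹ (f a) ∧
      ∀ᶠ y in 𝓝 (f a), f (g y) = y :=
  ⟨hf.localInverse f f' a hf', (hf.eventually_left_inverse hf').self_of_nhds,
    hf.to_localInverse hf', hf.eventually_right_inverse hf'⟩

theorem ne_and_add_div_sub_eq_zero {x y s c : 𝕜} (h : (x - s) * y = c) (hc : c ≠ 0) :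
    x ≠ s ∧ y + c / (s - x) = 0 := by
  have hxs : x ≠ s := by rintro rfl; simp_all
  refine ⟨hxs, ?_⟩
  rw [← h, ← neg_sub x s]
  field_simp [sub_ne_zero.mpr hxs]
  ring

theorem new_zero_near_added_pole_general
    (N : ℕ) (t : ℕ → ℝ)
    (a : ℕ → ℝ)
    (F : ℝ → ℝ) (hF : ∀ x, F x = 1 + ∑ n ∈ Finset.range N, a n / (t n - x))
    (s : ℝ) (hs : ∀ n < N, s ≠ t n) (ε : ℝ) (hε : 0 < ε) (hFs : F s = ε) :
    ∃ δ > (0 : ℝ), ∃ lam : ℝ → ℝ,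
      (∀ c ∈ Set.Ioo (0 : ℝ) δ,
        (∀ n < N, lam c ≠ t n) ∧ lam c ≠ s ∧ F (lam c) + c / (s - lam c) = 0) ∧
      Filter.Tendsto lam (nhdsWithin 0 (Set.Ioi 0)) (nhds s) ∧
      Filter.Tendsto (fun c => (lam c - s) / c) (nhdsWithin 0 (Set.Ioi 0)) (nhds (1 / ε)) := by
  obtain ⟨F', hFderiv⟩ : ∃ F', HasStrictDerivAt F F' s := by
    rw [funext hF]
    exact ⟨_, (hasStrictDerivAt_sum_div_sub _ a t fun n hn =>
      hs n (Finset.mem_range.mp hn)).const_add 1⟩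
  obtain ⟨lam, hlam0, hlam', hinv⟩ :=
    hFderiv.id_sub_const_mul.exists_right_inverse (hFs ▸ hε.ne')
  simp only [sub_self, zero_mul, hFs] at hlam0 hlam' hinv
  have hlim : Tendsto lam (𝓝 0) (𝓝 s) := hlam0 ▸ hlam'.hasDerivAt.continuousAt.tendsto
  have hpoles : ∀ᶠ c in 𝓝 0, ∀ n < N, lam c ≠ t n := by
    simpa using hlim.eventually <| (eventually_all_finset (Finset.range N)).2 fun n hn =>
      eventually_ne_nhds (hs n (Finset.mem_range.mp hn))
  obtain ⟨δ, hδ, hball⟩ := Metric.eventually_nhds_iff.mp (hinv.and hpoles)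
  refine ⟨δ, hδ, lam, fun c hc => ?_, hlim.mono_left nhdsWithin_le_nhds, ?_⟩
  · obtain ⟨hsolve, hnt⟩ := hball (by rw [Real.dist_0_eq_abs, abs_of_pos hc.1]; exact hc.2)
    exact ⟨hnt, ne_and_add_div_sub_eq_zero hsolve hc.1.ne'⟩
  · simpa [hlam0, div_eq_inv_mul] using hlam'.hasDerivAt.tendsto_slope_zero_right

/-- Perturbation of a level point of `F(x) = 1 + ∑_{n<N} a n / (t n - x)`: if
`F(s) = ε > 0` at a non-pole point `s`, then for small `c > 0` the perturbed function
`G_c(x) = F(x) + c/(s - x)` has a zero `lam c` near `s` (distinct from `s` and from the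
poles) with `lam c → s` and `(lam c - s)/c → 1/ε` as `c → 0⁺`, i.e.
`lam c = s + c/ε + o(c)`. -/
theorem new_zero_near_added_pole
    (N : ℕ) (hN : 1 ≤ N) (t : ℕ → ℝ) (ht : ∀ i j, i < j → j < N → t i < t j)
    (a : ℕ → ℝ) (ha : ∀ n < N, 0 < a n)
    (F : ℝ → ℝ) (hF : ∀ x, F x = 1 + ∑ n ∈ Finset.range N, a n / (t n - x))
    (s : ℝ) (hs : ∀ n < N, s ≠ t n) (ε : ℝ) (hε : 0 < ε) (hFs : F s = ε) :
    ∃ δ > (0 : ℝ), ∃ lam : ℝ → ℝ,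
      (∀ c ∈ Set.Ioo (0 : ℝ) δ,
        (∀ n < N, lam c ≠ t n) ∧ lam c ≠ s ∧ F (lam c) + c / (s - lam c) = 0) ∧
      Filter.Tendsto lam (nhdsWithin 0 (Set.Ioi 0)) (nhds s) ∧
      Filter.Tendsto (fun c => (lam c - s) / c) (nhdsWithin 0 (Set.Ioi 0)) (nhds (1 / ε)) :=
  new_zero_near_added_pole_general N t a F hF s hs ε hε hFs
end

section
/- Let X be a complex Banach space. For each N ≥ 1 let f_1^N, …, f_N^N ∈ X, and let (A_N)_{N≥1} be a nondecreasing sequence of reals with A_N ≥ 1 such that for every N and all complex scalars α_1, …, α_N one has Σ_{j=1}^N |α_j| ≤ A_N·‖Σ_{j=1}^N α_j f_j^N‖. Assume that for every N ≥ 2 and every j ∈ {1, …, N−1} one has ‖f_j^N − f_j^{N−1}‖ ≤ 2^{−(N+2)}/A_{N−1}. Then: (a) for every j ≥ 1 the limit f_j := lim_{N→∞} f_j^N exists in X; (b) if g ∈ X and there exist g_N ∈ span{f_j^N : 1 ≤ j ≤ N} with g_N → g in X, then g lies in the closed linear span of {f_j : j ≥ 1}. -/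
/-!
Since `A` is nondecreasing, the closeness estimates telescope to
`‖f M j - f N j‖ ≤ 2^{-(N+2)} / A N` for `j ≤ N ≤ M`, so each sequence `N ↦ f N j` is Cauchy
and its limit `flim j` obeys the same bound. Replacing `f N j` by `flim j` in
`g_N = ∑ α_j • f N j` moves it by at most `(∑ ‖α_j‖) 2^{-(N+2)} / A N ≤ 2^{-(N+2)} ‖g_N‖`
by the `ℓ¹` lower estimate, so these vectors of `span {flim j}` still converge to `g`.
-/

open Filter Finset Topology

section Transfer

variable {𝕜 X ι : Type*} [NormedField 𝕜] [NormedAddCommGroup X] [NormedSpace 𝕜 X]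

lemma norm_sum_smul_sub_sum_smul_le (s : Finset ι) (c : ι → 𝕜) {v w : ι → X} {δ : ℝ}
    (hδ : ∀ i ∈ s, ‖w i - v i‖ ≤ δ) :
    ‖∑ i ∈ s, c i • w i - ∑ i ∈ s, c i • v i‖ ≤ (∑ i ∈ s, ‖c i‖) * δ := by
  rw [← sum_sub_distrib, sum_mul]
  refine norm_sum_le_of_le s fun i hi => ?_
  rw [← smul_sub, norm_smul]
  exact mul_le_mul_of_nonneg_left (hδ i hi) (norm_nonneg _)

lemma exists_mem_span_perturbation_near (s : Finset ι) {v w : ι → X} {A δ : ℝ} (hδ₀ : 0 ≤ δ)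
    (hv : ∀ c : ι → 𝕜, ∑ i ∈ s, ‖c i‖ ≤ A * ‖∑ i ∈ s, c i • v i‖)
    (hδ : ∀ i ∈ s, ‖w i - v i‖ ≤ δ) {x : X} (hx : x ∈ Submodule.span 𝕜 (v '' s)) :
    ∃ y ∈ Submodule.span 𝕜 (w '' s), ‖y - x‖ ≤ A * δ * ‖x‖ := by
  obtain ⟨c, rfl⟩ := (Submodule.mem_span_image_finset_iff_exists_fun' 𝕜).mp hx
  refine ⟨∑ i ∈ s, c i • w i,
    (Submodule.mem_span_image_finset_iff_exists_fun' 𝕜).mpr ⟨c, rfl⟩, ?_⟩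
  calc ‖∑ i ∈ s, c i • w i - ∑ i ∈ s, c i • v i‖
      ≤ (∑ i ∈ s, ‖c i‖) * δ := norm_sum_smul_sub_sum_smul_le s c hδ
    _ ≤ A * ‖∑ i ∈ s, c i • v i‖ * δ := mul_le_mul_of_nonneg_right (hv c) hδ₀
    _ = A * δ * ‖∑ i ∈ s, c i • v i‖ := by ring

end Transfer

lemma mem_closure_of_forall_exists_norm_sub_le {X : Type*} [SeminormedAddCommGroup X]
    {S : Set X} {x : ℕ → X} {g : X} (hx : Tendsto x atTop (𝓝 g)) {r : ℕ → ℝ}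
    (hr : Tendsto r atTop (𝓝 0)) (hS : ∀ N, ∃ y ∈ S, ‖y - x N‖ ≤ r N * ‖x N‖) :
    g ∈ closure S := by
  choose y hyS hy using hS
  have hyx : Tendsto (fun N => y N - x N) atTop (𝓝 0) :=
    squeeze_zero_norm hy (by simpa using hr.mul (tendsto_norm.comp hx))
  refine mem_closure_of_tendsto (f := y) (b := atTop) ?_ (Eventually.of_forall hyS)
  simpa using hyx.add hx

section Limits

variable {X : Type*} [NormedAddCommGroup X] {f : ℕ → ℕ → X} {A : ℕ → ℝ}

/-- The closeness condition of the theorem with `N` replaced by `N + 1`, which avoids the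
truncated subtraction `N - 1`. -/
def IsGeometricallyClose (f : ℕ → ℕ → X) (A : ℕ → ℝ) : Prop :=
  ∀ N j, 1 ≤ j → j ≤ N → ‖f (N + 1) j - f N j‖ ≤ 1 / (2 ^ (N + 3) * A N)

lemma IsGeometricallyClose.dist_shift_le (hf : IsGeometricallyClose f A)
    (hA₀ : ∀ N, 0 < A N) (hA : Monotone A) {j N : ℕ} (hj : 1 ≤ j) (hjN : j ≤ N) (n : ℕ) :
    dist (f (n + N) j) (f (n + 1 + N) j) ≤ 1 / (2 ^ (N + 2) * A N) / 2 / 2 ^ n := by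
  have := hA₀ N
  rw [dist_comm, dist_eq_norm, add_right_comm]
  calc ‖f (n + N + 1) j - f (n + N) j‖
      ≤ 1 / (2 ^ (n + N + 3) * A (n + N)) := hf (n + N) j hj (by omega)
    _ ≤ 1 / (2 ^ (n + N + 3) * A N) := by gcongr; exact hA (Nat.le_add_left N n)
    _ = 1 / (2 ^ (N + 2) * A N) / 2 / 2 ^ n := by field_simp; ring

lemma IsGeometricallyClose.cauchySeq (hf : IsGeometricallyClose f A) (hA₀ : ∀ N, 0 < A N)
    (hA : Monotone A) {j : ℕ} (hj : 1 ≤ j) : CauchySeq (f · j) :=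
  (cauchySeq_shift j).mp (cauchySeq_of_le_geometric_two (hf.dist_shift_le hA₀ hA hj le_rfl))

lemma IsGeometricallyClose.norm_limUnder_sub_le [CompleteSpace X] (hf : IsGeometricallyClose f A)
    (hA₀ : ∀ N, 0 < A N) (hA : Monotone A) {j N : ℕ} (hj : 1 ≤ j) (hjN : j ≤ N) :
    ‖limUnder atTop (f · j) - f N j‖ ≤ 1 / (2 ^ (N + 2) * A N) := by
  rw [← dist_eq_norm, dist_comm]
  have hlim := (tendsto_add_atTop_iff_nat N).2 (hf.cauchySeq hA₀ hA hj).tendsto_limUnder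
  simpa using dist_le_of_le_geometric_two_of_tendsto₀ (hf.dist_shift_le hA₀ hA hj hjN) hlim

end Limits

/-- Convergence and completeness from the ℓ¹-basis-constant estimates: if the finite
families `f N 1, …, f N N` satisfy `∑ |α_j| ≤ A_N ‖∑ α_j f N j‖` and consecutive
generations are close, `‖f N j - f (N-1) j‖ ≤ 2^{-(N+2)}/A_{N-1}`, then (a) each sequence
`N ↦ f N j` converges to some `flim j`, and (b) any `g` which is a limit of vectors
`g_N ∈ span {f N j : 1 ≤ j ≤ N}` lies in the closed linear span of `{flim j : j ≥ 1}`. -/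
theorem limit_family_complete
    {X : Type*} [NormedAddCommGroup X] [NormedSpace ℂ X] [CompleteSpace X]
    (f : ℕ → ℕ → X) (A : ℕ → ℝ)
    (hA1 : ∀ N, 1 ≤ A N) (hAmono : Monotone A)
    (hBasis : ∀ N, 1 ≤ N → ∀ α : ℕ → ℂ,
      ∑ j ∈ Finset.Icc 1 N, ‖α j‖ ≤ A N * ‖∑ j ∈ Finset.Icc 1 N, α j • f N j‖)
    (hClose : ∀ N, 2 ≤ N → ∀ j, 1 ≤ j → j ≤ N - 1 →
      ‖f N j - f (N - 1) j‖ ≤ 1 / (2 ^ (N + 2) * A (N - 1))) :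
    ∃ flim : ℕ → X,
      (∀ j, 1 ≤ j →
        Filter.Tendsto (fun N => f N j) Filter.atTop (nhds (flim j))) ∧
      ∀ g : X,
        (∃ gN : ℕ → X,
          (∀ N, 1 ≤ N →
            gN N ∈ Submodule.span ℂ ((fun j => f N j) '' Set.Icc 1 N)) ∧
          Filter.Tendsto gN Filter.atTop (nhds g)) →
        g ∈ closure (Submodule.span ℂ (flim '' Set.Ici 1) : Set X) := by
  have hA₀ : ∀ N, 0 < A N := fun N => one_pos.trans_le (hA1 N)
  have hf : IsGeometricallyClose f A := fun N j hj hjN => by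
    simpa using hClose (N + 1) (by omega) j hj (by omega)
  refine ⟨fun j => limUnder atTop (f · j),
    fun j hj => (hf.cauchySeq hA₀ hAmono hj).tendsto_limUnder, ?_⟩
  rintro g ⟨gN, hgN, hg⟩
  have hr : Tendsto (fun N : ℕ => 1 / 2 ^ (N + 3) : ℕ → ℝ) atTop (𝓝 0) := by
    simpa [Function.comp_def] using (tendsto_pow_atTop_nhds_zero_of_lt_one
      (r := (1 / 2 : ℝ)) (by norm_num) (by norm_num)).comp (tendsto_add_atTop_nat 3)
  refine mem_closure_of_forall_exists_norm_sub_le ((tendsto_add_atTop_iff_nat 1).2 hg) hr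
    fun N => ?_
  have hgN' : gN (N + 1) ∈ Submodule.span ℂ (f (N + 1) '' ↑(Icc 1 (N + 1))) := by
    simpa only [coe_Icc] using hgN (N + 1) (by omega)
  have hAN := hA₀ (N + 1)
  obtain ⟨y, hy, hyg⟩ := exists_mem_span_perturbation_near _ (by positivity)
    (hBasis (N + 1) (by omega)) (fun j hj => hf.norm_limUnder_sub_le hA₀ hAmono
      (mem_Icc.1 hj).1 (mem_Icc.1 hj).2) hgN'
  refine ⟨y, Submodule.span_mono (Set.image_mono ?_) hy, hyg.trans_eq ?_⟩
  · simpa only [coe_Icc] using Set.Icc_subset_Ici_self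
  · field_simp
end
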